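/- For all integers p, q ≥ 0 and every f ∈ H_{p,q}, one has −Z₁̄(Z₁ f) = p (q + 1) · f; that is, every harmonic bihomogeneous polynomial of bidegree (p, q) is an eigenvector of the conjugate Kohn Laplacian □̄_b = −Z₁̄ ∘ Z₁ with eigenvalue p(q+1). -/

import Mathlib

/- Work in the polynomial ring `A4 = ℂ[z, w, z̄, w̄]`, realized as
`MvPolynomial (Fin 4) ℂ` with variables `0 ↔ z`, `1 ↔ w`, `2 ↔ z̄`, `3 ↔ w̄`. -/

open MvPolynomial MeasureTheory

noncomputable section

abbrev A4 := MvPolynomial (Fin 4) ℂ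

/-- `Z₁ f := w̄·∂_z f − z̄·∂_w f` -/
def Z1 (f : A4) : A4 := X 3 * pderiv 0 f - X 2 * pderiv 1 f

/-- `Z₁̄ f := w·∂_{z̄} f − z·∂_{w̄} f` -/
def Z1c (f : A4) : A4 := X 1 * pderiv 2 f - X 0 * pderiv 3 f

/-- The Laplacian `Δ f := ∂_z ∂_{z̄} f + ∂_w ∂_{w̄} f` -/
def Lap (f : A4) : A4 := pderiv 0 (pderiv 2 f) + pderiv 1 (pderiv 3 f)

/-- weight giving degree in the variables (z, w) -/
def wHol : Fin 4 → ℕ := ![1, 1, 0, 0]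

/-- weight giving degree in the variables (z̄, w̄) -/
def wAnti : Fin 4 → ℕ := ![0, 0, 1, 1]

/-- `f` is bihomogeneous of bidegree `(p, q)`: homogeneous of degree `p` in `(z, w)`
and of degree `q` in `(z̄, w̄)`. -/
def IsBihom (p q : ℕ) (f : A4) : Prop :=
  IsWeightedHomogeneous wHol f p ∧ IsWeightedHomogeneous wAnti f q

lemma my_pderiv_comm (i j : Fin 4) (f : A4) :
    pderiv i (pderiv j f) = pderiv j (pderiv i f) := by
  induction f using MvPolynomial.induction_on' with
  | monomial d c =>
    rcases eq_or_ne i j with rfl | hij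
    · rfl
    · simp only [pderiv_monomial]
      rw [show d - Finsupp.single j 1 - Finsupp.single i 1
            = d - Finsupp.single i 1 - Finsupp.single j 1 from by
          ext a; simp only [Finsupp.tsub_apply, Finsupp.single_apply]; omega]
      congr 1
      rw [Finsupp.tsub_apply, Finsupp.tsub_apply,
        Finsupp.single_eq_of_ne' (Ne.symm hij), Finsupp.single_eq_of_ne' hij]
      simp only [Nat.sub_zero]
      ring
  | add g h hg hh => simp [hg, hh]

lemma X_mul_pderiv_monomial (k : Fin 4) (d : Fin 4 →₀ ℕ) (c : ℂ) :
    X k * pderiv k (monomial d c) = monomial d (((d k : ℂ)) * c) := by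
  rw [pderiv_monomial, X, monomial_mul, one_mul]
  by_cases h : d k = 0
  · simp [h]
  · rw [show Finsupp.single k 1 + (d - Finsupp.single k 1) = d from by
        ext a
        rcases eq_or_ne k a with rfl | hk
        · simp only [Finsupp.add_apply, Finsupp.tsub_apply, Finsupp.single_eq_same]; omega
        · simp [Finsupp.single_eq_of_ne' hk]]
    rw [mul_comm]

lemma euler_id {w : Fin 4 → ℕ} {n : ℕ} {f : A4} (hf : IsWeightedHomogeneous w f n) :
    ∑ k : Fin 4, (C ((w k : ℂ)) * (X k * pderiv k f)) = C (n : ℂ) * f := by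
  conv_lhs => rw [f.as_sum]
  conv_rhs => rw [f.as_sum]
  rw [Finset.mul_sum]
  simp only [map_sum, Finset.mul_sum]
  rw [Finset.sum_comm]
  refine Finset.sum_congr rfl fun d hd => ?_
  have hw : (Finsupp.weight w) d = n := hf (mem_support_iff.mp hd)
  have hsum : ∑ k : Fin 4, (d k) * (w k) = n := by
    rw [← hw, Finsupp.weight_apply, Finsupp.sum_fintype]
    · simp [smul_eq_mul]
    · intro; simp
  simp only [X_mul_pderiv_monomial, C_mul_monomial]
  rw [← map_sum]
  congr 1
  have : ((∑ k : Fin 4, (d k) * (w k) : ℕ) : ℂ) = (n : ℂ) := by rw [hsum]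
  push_cast at this
  rw [← this, Finset.sum_mul]
  exact Finset.sum_congr rfl fun k _ => by ring

lemma pderiv_isWeightedHomogeneous {w : Fin 4 → ℕ} {n : ℕ} {f : A4} (j : Fin 4)
    (hj : w j = 0) (hf : IsWeightedHomogeneous w f n) :
    IsWeightedHomogeneous w (pderiv j f) n := by
  conv_lhs => rw [f.as_sum]
  rw [map_sum]
  apply IsWeightedHomogeneous.sum
  intro d hd
  rw [pderiv_monomial]
  apply isWeightedHomogeneous_monomial
  have hw : (Finsupp.weight w) d = n := hf (mem_support_iff.mp hd)
  rw [← hw, Finsupp.weight_apply, Finsupp.weight_apply,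
    Finsupp.sum_fintype _ _ (fun i => by simp), Finsupp.sum_fintype _ _ (fun i => by simp)]
  refine Finset.sum_congr rfl fun k _ => ?_
  rcases eq_or_ne k j with rfl | hk
  · simp [hj]
  · rw [Finsupp.tsub_apply, Finsupp.single_eq_of_ne' (Ne.symm hk), Nat.sub_zero]

/-- every `f ∈ H_{p,q}` is an eigenvector of the conjugate Kohn Laplacian
`□̄_b = −Z₁̄ ∘ Z₁` with eigenvalue `p(q+1)`. -/
theorem conj_kohn_laplacian_eigenvalue (p q : ℕ) (f : A4)
    (hf : IsBihom p q f) (hharm : Lap f = 0) :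
    -(Z1c (Z1 f)) = ((p : ℂ) * ((q : ℂ) + 1)) • f := by
  obtain ⟨hfp, hfq⟩ := hf
  have hD2 : IsWeightedHomogeneous wHol (pderiv 2 f) p :=
    pderiv_isWeightedHomogeneous 2 (by decide) hfp
  have hD3 : IsWeightedHomogeneous wHol (pderiv 3 f) p :=
    pderiv_isWeightedHomogeneous 3 (by decide) hfp
  have hA : X 0 * pderiv 0 (pderiv 2 f) + X 1 * pderiv 1 (pderiv 2 f)
      = C (p : ℂ) * pderiv 2 f := by
    have h := euler_id hD2
    simpa [Fin.sum_univ_four, wHol] using h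
  have hB : X 0 * pderiv 0 (pderiv 3 f) + X 1 * pderiv 1 (pderiv 3 f)
      = C (p : ℂ) * pderiv 3 f := by
    have h := euler_id hD3
    simpa [Fin.sum_univ_four, wHol] using h
  have hC' : X 2 * pderiv 2 f + X 3 * pderiv 3 f = C (q : ℂ) * f := by
    have h := euler_id hfq
    simpa [Fin.sum_univ_four, wAnti] using h
  have hE : X 0 * pderiv 0 f + X 1 * pderiv 1 f = C (p : ℂ) * f := by
    have h := euler_id hfp
    simpa [Fin.sum_univ_four, wHol] using h
  have hL : pderiv 0 (pderiv 2 f) + pderiv 1 (pderiv 3 f) = 0 := hharm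
  have e1 : pderiv 2 (X 3 : A4) = 0 := pderiv_X_of_ne (by decide)
  have e2 : pderiv 2 (X 2 : A4) = 1 := pderiv_X_self 2
  have e3 : pderiv 3 (X 3 : A4) = 1 := pderiv_X_self 3
  have e4 : pderiv 3 (X 2 : A4) = 0 := pderiv_X_of_ne (by decide)
  rw [smul_eq_C_mul, map_mul, map_add, map_one, Z1c, Z1]
  simp only [map_sub, pderiv_mul, e1, e2, e3, e4, zero_mul, one_mul, add_zero, zero_add,
    my_pderiv_comm 2 0 f, my_pderiv_comm 2 1 f, my_pderiv_comm 3 0 f, my_pderiv_comm 3 1 f]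
  linear_combination X 2 * hA + X 3 * hB + C (p : ℂ) * hC' + hE
    - (X 0 * X 2 + X 1 * X 3) * hL
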